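/- In the PEV-based Diffusion Mechanism, hiding neighbors cannot help a non-selected critical agent: if under truthful reporting agent i = i_k is a critical agent preceding the selected agent i_t (k < t), with expected utility w_{i_{k+1}} − w_{i_k}, then under any misreport of her neighbor set in which the new selected agent j' is not a critical agent of the original welfare-maximizer j, her new utility w'_{i'_{k'+1}} − w'_{i'_{k'}} satisfies w'_{i'_{k'+1}} − w'_{i'_{k'}} ≤ w_{i_{k+1}} − w_{i_k}, because w'_{i'_{k'}} = w_{i_k} (removing i disconnects the same set of agents) and I((nil, θ̂'_{−i'_{k'+1}})) ⊆ I((nil, θ̂_{−i_{k+1}})) implies w'_{i'_{k'+1}} ≤ w_{i_{k+1}}. -/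

import Mathlib

open Finset

/-- An agent's report: a distribution over qualities, a cost, and a set of invited neighbours. -/
structure Report (A : Type*) where
  f : ℝ → ℝ
  c : ℝ
  nbrs : Finset A

/-- Reported expected welfare  E_{f}[Q] - c. -/
def welfare {A : Type*} (Q : Finset ℝ) (r : Report A) : ℝ :=
  (∑ q ∈ Q, q * r.f q) - r.c

/-- `f` is a probability mass function on the finite quality set `Q`. -/
def IsPMF (Q : Finset ℝ) (f : ℝ → ℝ) : Prop :=
  (∀ q ∈ Q, 0 ≤ f q) ∧ (∑ q ∈ Q, f q) = 1

/-- Edge of the reported (diffusion) graph, avoiding a removed set `R` of agents. -/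
def edge {A : Type*} (θ : A → Report A) (R : Set A) (a b : A) : Prop :=
  a ∉ R ∧ b ∉ R ∧ b ∈ (θ a).nbrs

/-- `i` participates: it is reachable from the requester (whose neighbours are `rs`)
avoiding the removed agents `R`.  `participates rs θ {i} k` is membership in I((nil, θ_{-i})). -/
def participates {A : Type*} (rs : Finset A) (θ : A → Report A) (R : Set A) (i : A) : Prop :=
  i ∉ R ∧ ∃ j ∈ rs, j ∉ R ∧ Relation.ReflTransGen (edge θ R) j i

/-- `l` is a simple path from (a neighbour of) the requester to `i` in the reported graph. -/
def pathTo {A : Type*} (rs : Finset A) (θ : A → Report A) (i : A) (l : List A) : Prop :=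
  l.Nodup ∧ l.Chain' (edge θ ∅) ∧ (∃ a, l.head? = some a ∧ a ∈ rs) ∧ l.getLast? = some i

/-- `i` is a critical agent of `j`: `i` lies on every simple path from the requester to `j`. -/
def critical {A : Type*} (rs : Finset A) (θ : A → Report A) (i j : A) : Prop :=
  ∀ l, pathTo rs θ j l → i ∈ l

/-- `v` is the maximum reported welfare among participants when `i` does not
participate (`0` if there are none). -/
def cmax {A : Type*} (Q : Finset ℝ) (rs : Finset A) (θ : A → Report A) (i : A) (v : ℝ) : Prop :=
  0 ≤ v ∧ (∀ k, participates rs θ {i} k → welfare Q (θ k) ≤ v) ∧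
    (v = 0 ∨ ∃ k, participates rs θ {i} k ∧ v = welfare Q (θ k))

/-- An execution of the PEV-based Diffusion Mechanism on report profile `θ`:
`seq 0, …, seq (m-1)` is the critical-agent sequence (i_1, …, i_m) of the
reported-welfare-maximizing agent `j = seq (m-1)`, `w k` the counterfactual maxima,
`t` the index of the selected agent, and `p q i` agent `i`'s payoff when the realized
quality is `q`. -/
structure PEVRun {A : Type*} (Q : Finset ℝ) (rs : Finset A) (θ : A → Report A) where
  m : ℕ
  hm : 0 < m
  seq : ℕ → A
  w : ℕ → ℝ
  t : ℕ
  ht : t < m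
  p : ℝ → A → ℝ
  /-- `j = seq (m-1)` maximizes reported expected welfare among participants -/
  hj : participates rs θ ∅ (seq (m-1)) ∧
    ∀ k, participates rs θ ∅ k → welfare Q (θ k) ≤ welfare Q (θ (seq (m-1)))
  hinj : ∀ k < m, ∀ k' < m, seq k = seq k' → k = k'
  /-- the sequence enumerates exactly the (participating) critical agents of `j` -/
  hcrit : ∀ i, (∃ k < m, seq k = i) ↔
    (critical rs θ i (seq (m-1)) ∧ participates rs θ ∅ i)
  /-- it is ordered by the criticality relation -/
  hord : ∀ k k', k < k' → k' < m → critical rs θ (seq k) (seq k')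
  /-- `w k` is the maximum reported welfare among I((nil, θ_{-seq k})) -/
  hw : ∀ k < m, cmax Q rs θ (seq k) (w k)
  /-- the selected agent is the first in the sequence whose reported welfare equals
  the next counterfactual maximum (and `j` if there is none) -/
  hsel : (t + 1 < m → welfare Q (θ (seq t)) = w (t + 1)) ∧
    ∀ k < t, welfare Q (θ (seq k)) ≠ w (k + 1)
  hpay1 : ∀ q, ∀ k < t, p q (seq k) = w (k + 1) - w k
  hpay2 : ∀ q, p q (seq t) = q - w t
  hpay3 : ∀ q, ∀ k, t < k → k < m → p q (seq k) = 0
  hpay4 : ∀ q i, (∀ k < m, seq k ≠ i) → p q i = 0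

/-!
Removing `i` from the graph makes her own report irrelevant, so both runs see the same
participants without `i`, and `w'_{k'} = w_k`.

For `w'_{k'+1} ≤ w_{k+1}`, write `b = i_{k+1}`, `b' = i'_{k'+1}` and let `p` participate in the
misreported graph without `b'`. Either `p` avoids `b` in the truthful graph, or `b` is critical
for `p`. In the latter case `b` itself participates without `b'`, so `b` is not a critical agent
of the new maximizer `j'`: were `b = i'_l`, then `l > k'` would make `b'` critical for `b`, and
`l ≤ k'` would make `b` and `i` critical for each other, forcing `b = i`. Hence `j'` survives the
removal of `b` in the truthful graph, and `p`'s welfare is bounded by that of `j'`, hence by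
`w_{k+1}`.
-/

section Graph

variable {A : Type*} {rs : Finset A} {θ θ' : A → Report A} {S : Set A}

lemma edge_congr (h : ∀ a ∉ S, (θ' a).nbrs = (θ a).nbrs) : edge θ' S = edge θ S := by
  ext a b
  unfold edge
  exact and_congr_right fun ha => by rw [h a ha]

lemma edge_of_nbrs_subset (h : ∀ a, (θ' a).nbrs ⊆ (θ a).nbrs) {a b : A} (hab : edge θ' S a b) :
    edge θ S a b :=
  ⟨hab.1, hab.2.1, h a hab.2.2⟩

lemma edge_anti {S' : Set A} (hS : S' ⊆ S) {a b : A} (hab : edge θ S a b) : edge θ S' a b :=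
  ⟨fun h => hab.1 (hS h), fun h => hab.2.1 (hS h), hab.2.2⟩

lemma participates_congr (h : ∀ a ∉ S, (θ' a).nbrs = (θ a).nbrs) {x : A} :
    participates rs θ' S x ↔ participates rs θ S x := by
  rw [participates, participates, edge_congr h]

lemma participates_of_nbrs_subset (h : ∀ a, (θ' a).nbrs ⊆ (θ a).nbrs) {x : A}
    (hx : participates rs θ' S x) : participates rs θ S x :=
  let ⟨hxS, a, ha, haS, hax⟩ := hx
  ⟨hxS, a, ha, haS, Relation.ReflTransGen.mono (fun _ _ => edge_of_nbrs_subset h) _ _ hax⟩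

lemma participates_anti {S' : Set A} (hS : S' ⊆ S) {x : A} (hx : participates rs θ S x) :
    participates rs θ S' x :=
  let ⟨hxS, a, ha, haS, hax⟩ := hx
  ⟨fun h => hxS (hS h), a, ha, fun h => haS (hS h),
    Relation.ReflTransGen.mono (fun _ _ => edge_anti hS) _ _ hax⟩

lemma participates_of_pathTo {x : A} {l : List A} (h : pathTo rs θ x l)
    (hS : ∀ y ∈ l, y ∉ S) : participates rs θ S x := by
  obtain ⟨-, hc, ⟨a, hh, ha⟩, hl⟩ := h
  obtain ⟨t, rfl⟩ := List.head?_eq_some_iff.mp hh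
  refine ⟨hS x (List.mem_of_getLast? hl), a, ha, hS a List.mem_cons_self, ?_⟩
  refine List.relationReflTransGen_of_exists_isChain_cons t
    (hc.imp_of_mem_imp fun u v hu hv huv => ⟨hS u hu, hS v hv, huv.2.2⟩) ?_
  simpa [List.getLast?_eq_some_getLast] using hl

lemma pathTo_prefix {x y : A} {l : List A} (h : pathTo rs θ x l) (hy : y ∈ l) :
    ∃ l₁ l₂, l = l₁ ++ y :: l₂ ∧ pathTo rs θ y (l₁ ++ [y]) := by
  obtain ⟨hnd, hc, ⟨a, hh, ha⟩, -⟩ := h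
  obtain ⟨l₁, l₂, rfl⟩ := List.append_of_mem hy
  have hsplit : l₁ ++ y :: l₂ = (l₁ ++ [y]) ++ l₂ := by simp
  refine ⟨l₁, l₂, rfl, ?_, ?_, ⟨a, ?_, ha⟩, List.getLast?_concat⟩
  · exact hnd.sublist ((List.append_sublist_append_left l₁).mpr (by simp))
  · rw [hsplit] at hc
    exact (List.isChain_append.mp hc).1
  · cases l₁ <;> simpa using hh

lemma exists_pathTo_of_participates {x : A} (h : participates rs θ S x) :
    ∃ l, pathTo rs θ x l ∧ ∀ y ∈ l, y ∉ S := by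
  obtain ⟨-, a, ha, haS, hax⟩ := h
  induction hax with
  | refl => exact ⟨[a], ⟨by simp, List.isChain_singleton _, ⟨a, rfl, ha⟩, by simp⟩, by simpa⟩
  | @tail b c _ hbc ih =>
    obtain ⟨l, hl, hlS⟩ := ih
    by_cases hc : c ∈ l
    · obtain ⟨l₁, l₂, rfl, hl'⟩ := pathTo_prefix hl hc
      exact ⟨l₁ ++ [c], hl', fun y hy => hlS y (by simp at hy ⊢; tauto)⟩
    obtain ⟨hnd, hch, ⟨a', hh, ha'⟩, hlast⟩ := hl
    obtain ⟨l', rfl⟩ := List.getLast?_eq_some_iff.mp hlast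
    refine ⟨l' ++ [b] ++ [c], ⟨?_, ?_, ⟨a', ?_, ha'⟩, List.getLast?_concat⟩, ?_⟩
    · refine List.nodup_append.mpr ⟨hnd, by simp, ?_⟩
      simp only [List.mem_singleton]
      rintro u hu _ rfl rfl
      exact hc hu
    · exact List.isChain_append.mpr ⟨hch, List.isChain_singleton _,
        by simpa [edge] using hbc.2.2⟩
    · simpa using hh
    · intro y hy
      rcases List.mem_append.mp hy with hy | hy
      exacts [hlS y hy, by simp only [List.mem_singleton] at hy; exact hy ▸ hbc.2.1]

lemma critical_self (x : A) : critical rs θ x x :=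
  fun _ hl => List.mem_of_getLast? hl.2.2.2

lemma participates_singleton_iff {a x : A} :
    participates rs θ {a} x ↔ ¬ critical rs θ a x := by
  constructor
  · intro hx hcrit
    obtain ⟨l, hl, hS⟩ := exists_pathTo_of_participates hx
    exact hS a (hcrit l hl) rfl
  · intro hcrit
    simp only [critical, not_forall] at hcrit
    obtain ⟨l, hl, hal⟩ := hcrit
    exact participates_of_pathTo hl (by rintro y hy rfl; exact hal hy)

lemma participates_of_critical {a x : A} (h : critical rs θ a x) (hx : participates rs θ S x) :
    participates rs θ S a := by
  obtain ⟨l, hl, hS⟩ := exists_pathTo_of_participates hx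
  obtain ⟨l₁, l₂, rfl, hl'⟩ := pathTo_prefix hl (h l hl)
  exact participates_of_pathTo hl' fun y hy => hS y (by simp at hy ⊢; tauto)

lemma critical_of_nbrs_subset (h : ∀ a, (θ' a).nbrs ⊆ (θ a).nbrs) {a x : A}
    (hax : critical rs θ a x) : critical rs θ' a x :=
  fun l hl => hax l ⟨hl.1, hl.2.1.imp fun _ _ => edge_of_nbrs_subset h, hl.2.2⟩

lemma critical_antisymm {a b : A} (hab : critical rs θ a b) (hba : critical rs θ b a)
    (ha : participates rs θ ∅ a) : a = b := by
  obtain ⟨l, hl, -⟩ := exists_pathTo_of_participates ha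
  obtain ⟨l₁, l₂, rfl, hl'⟩ := pathTo_prefix hl (hba l hl)
  by_contra hne
  have ha₁ : a ∈ l₁ := by simpa [hne] using hab _ hl'
  have ha₂ : a ∈ b :: l₂ := by
    have hlast := hl.2.2.2
    rw [List.getLast?_append_of_ne_nil _ (by simp)] at hlast
    exact List.mem_of_getLast? hlast
  exact (List.nodup_append.mp hl.1).2.2 a ha₁ a ha₂ rfl

end Graph

lemma cmax_le {A : Type*} {Q : Finset ℝ} {rs : Finset A} {θ : A → Report A} {a : A} {v v' : ℝ}
    (hv : cmax Q rs θ a v) (hv' : 0 ≤ v')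
    (h : ∀ x, participates rs θ {a} x → welfare Q (θ x) ≤ v') :
    v ≤ v' := by
  obtain ⟨-, -, rfl | ⟨x, hx, rfl⟩⟩ := hv
  exacts [hv', h x hx]

namespace PEVRun

variable {A : Type*} {Q : Finset ℝ} {rs : Finset A} {θ : A → Report A} (R : PEVRun Q rs θ)

lemma critical_seq_of_le {k₁ k₂ : ℕ} (h : k₁ ≤ k₂) (hk₂ : k₂ < R.m) :
    critical rs θ (R.seq k₁) (R.seq k₂) := by
  rcases h.lt_or_eq with h | rfl
  exacts [R.hord k₁ k₂ h hk₂, critical_self _]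

end PEVRun

section Misreport

variable {A : Type*} [DecidableEq A] {Q : Finset ℝ} {rs : Finset A} {θ : A → Report A} {i : A}
  {ρ : Report A}

lemma welfare_update (hρf : ρ.f = (θ i).f) (hρc : ρ.c = (θ i).c) (x : A) :
    welfare Q (Function.update θ i ρ x) = welfare Q (θ x) := by
  rcases eq_or_ne x i with rfl | hx
  · simp [welfare, hρf, hρc]
  · rw [Function.update_of_ne hx]

lemma nbrs_update_subset (hρn : ρ.nbrs ⊆ (θ i).nbrs) (x : A) :
    (Function.update θ i ρ x).nbrs ⊆ (θ x).nbrs := by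
  rcases eq_or_ne x i with rfl | hx
  · simpa
  · rw [Function.update_of_ne hx]

lemma cmax_update_self_eq (hρf : ρ.f = (θ i).f) (hρc : ρ.c = (θ i).c) {v' v : ℝ}
    (hv' : cmax Q rs (Function.update θ i ρ) i v') (hv : cmax Q rs θ i v) : v' = v := by
  have hI : ∀ x, participates rs (Function.update θ i ρ) {i} x ↔ participates rs θ {i} x :=
    fun x => participates_congr fun a ha => by rw [Function.update_of_ne ha]
  apply le_antisymm
  · exact cmax_le hv' hv.1 fun x hx =>
      (welfare_update hρf hρc x).trans_le (hv.2.1 x ((hI x).1 hx))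
  · exact cmax_le hv hv'.1 fun x hx =>
      (welfare_update hρf hρc x).symm.trans_le (hv'.2.1 x ((hI x).2 hx))

lemma not_critical_of_participates_succ (hρn : ρ.nbrs ⊆ (θ i).nbrs) (R : PEVRun Q rs θ)
    (R' : PEVRun Q rs (Function.update θ i ρ)) {k k' : ℕ} (hk : R.seq k = i) (hk₁ : k + 1 < R.m)
    (hk' : R'.seq k' = i) (hk'm : k' < R'.m)
    (hb : participates rs (Function.update θ i ρ) {R'.seq (k' + 1)} (R.seq (k + 1))) :
    ¬ critical rs (Function.update θ i ρ) (R.seq (k + 1)) (R'.seq (R'.m - 1)) := by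
  intro hcrit
  obtain ⟨l, hl, hlb⟩ :=
    (R'.hcrit (R.seq (k + 1))).2 ⟨hcrit, participates_anti (Set.empty_subset _) hb⟩
  rw [← hlb] at hb
  rcases le_or_gt l k' with hle | hlt
  · have hbi : critical rs _ (R'.seq l) i := hk' ▸ R'.critical_seq_of_le hle hk'm
    have hib : critical rs _ i (R'.seq l) := hlb ▸ hk ▸
      critical_of_nbrs_subset (nbrs_update_subset hρn) (R.hord k (k + 1) (by omega) hk₁)
    have hbi_eq : R'.seq l = i :=
      critical_antisymm hbi hib (participates_anti (Set.empty_subset _) hb)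
    have := R.hinj (k + 1) hk₁ k (by omega) (by rw [← hlb, hbi_eq, hk])
    omega
  · exact participates_singleton_iff.mp hb (R'.critical_seq_of_le hlt hl)

lemma w_succ_le (hρf : ρ.f = (θ i).f) (hρc : ρ.c = (θ i).c) (hρn : ρ.nbrs ⊆ (θ i).nbrs)
    (R : PEVRun Q rs θ) (R' : PEVRun Q rs (Function.update θ i ρ)) {k k' : ℕ}
    (hk : R.seq k = i) (hk₁ : k + 1 < R.m) (hk' : R'.seq k' = i) (hk'₁ : k' + 1 < R'.m) :
    R'.w (k' + 1) ≤ R.w (k + 1) := by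
  have hθ := nbrs_update_subset hρn
  have hwb := R.hw (k + 1) hk₁
  refine cmax_le (R'.hw (k' + 1) hk'₁) hwb.1 fun p hp => ?_
  by_cases hpb : participates rs θ {R.seq (k + 1)} p
  · exact (welfare_update hρf hρc p).trans_le (hwb.2.1 p hpb)
  rw [participates_singleton_iff, not_not] at hpb
  have hb : participates rs (Function.update θ i ρ) {R'.seq (k' + 1)} (R.seq (k + 1)) :=
    participates_of_critical (critical_of_nbrs_subset hθ hpb) hp
  have hj' : participates rs θ {R.seq (k + 1)} (R'.seq (R'.m - 1)) :=
    participates_of_nbrs_subset hθ (participates_singleton_iff.mpr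
      (not_critical_of_participates_succ hρn R R' hk hk₁ hk' (by omega) hb))
  calc welfare Q (Function.update θ i ρ p)
      ≤ welfare Q (Function.update θ i ρ (R'.seq (R'.m - 1))) :=
        R'.hj.2 p (participates_anti (Set.empty_subset _) hp)
    _ = welfare Q (θ (R'.seq (R'.m - 1))) := welfare_update hρf hρc _
    _ ≤ R.w (k + 1) := hwb.2.1 _ hj'

end Misreport

theorem stmt_9_general {A : Type*} [DecidableEq A] (Q : Finset ℝ) (rs : Finset A)
    (θ : A → Report A) (i : A) (ρ : Report A)
    (hρf : ρ.f = (θ i).f) (hρc : ρ.c = (θ i).c) (hρn : ρ.nbrs ⊆ (θ i).nbrs)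
    (R : PEVRun Q rs θ) (R' : PEVRun Q rs (Function.update θ i ρ))
    (k k' : ℕ) (hk : R.seq k = i) (hkt : k < R.t)
    (hk' : R'.seq k' = i) (hk't : k' < R'.t) :
    R'.w (k' + 1) - R'.w k' ≤ R.w (k + 1) - R.w k := by
  have hk₁ : k + 1 < R.m := lt_of_le_of_lt hkt R.ht
  have hk'₁ : k' + 1 < R'.m := lt_of_le_of_lt hk't R'.ht
  have hw : R'.w k' = R.w k :=
    cmax_update_self_eq hρf hρc (hk' ▸ R'.hw k' (by omega)) (hk ▸ R.hw k (by omega))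
  have hw_succ := w_succ_le hρf hρc hρn R R' hk hk₁ hk' hk'₁
  linarith

/-- Hiding neighbours cannot help a non-selected critical agent: if under truthful
reporting agent `i = i_k` is a critical agent preceding the selected agent
(`k < t`, expected utility w_{k+1} - w_k), and `i` misreports only her neighbour set
(`ρ.f = f_i`, `ρ.c = c_i`, `ρ.nbrs ⊆ r_i`) so that in the new run the selected agent
is not a critical agent of the original welfare-maximizer, while `i = i'_{k'}` still
precedes the new selected agent (`k' < t'`), then her new utility
w'_{k'+1} - w'_{k'} is at most her original utility w_{k+1} - w_k. -/
theorem stmt_9 {A : Type*} [DecidableEq A] (Q : Finset ℝ) (rs : Finset A)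
    (θ : A → Report A) (i : A) (ρ : Report A)
    (hρf : ρ.f = (θ i).f) (hρc : ρ.c = (θ i).c) (hρn : ρ.nbrs ⊆ (θ i).nbrs)
    (R : PEVRun Q rs θ) (R' : PEVRun Q rs (Function.update θ i ρ))
    (k k' : ℕ) (hk : R.seq k = i) (hkt : k < R.t)
    (hk' : R'.seq k' = i) (hk't : k' < R'.t)
    (hnotcrit : ¬ critical rs θ (R'.seq R'.t) (R.seq (R.m - 1))) :
    R'.w (k' + 1) - R'.w k' ≤ R.w (k + 1) - R.w k :=
  stmt_9_general Q rs θ i ρ hρf hρc hρn R R' k k' hk hkt hk' hk't
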